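/- arXiv:2011.00228 — 5 statements merged into one kernel-verified Lean document; each statement's English description precedes it below -/
import Mathlib

section
/- For real x → ∞, π/arccos((2x²−1)/(2x²)) = x·π + O(1/x); more precisely, |π/arccos(1 − 1/(2x²)) − πx| ≤ C/x for some constant C and all x ≥ 1. -/
/-!
Put `u = 1 / (2x)`. Since `cos (2 arcsin u) = 1 - 2u²`, the angle is `arccos (1 - 1/(2x²)) = 2 arcsin u`,
so the quantity to bound is `π/2 · |1/arcsin u - 1/u|`. Writing `s = arcsin u`, so that `sin s = u`,
the Taylor bound `s - s³/6 < sin s` gives `0 ≤ 1/u - 1/s < s²/(6u)`, and Jordan's inequality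
`s ≤ π u / 2` turns this into `O(u) = O(1/x)`.
-/

open Real

namespace Real

lemma arccos_one_sub_two_mul_sq {u : ℝ} (hu₀ : 0 ≤ u) (hu₁ : u ≤ 1) :
    arccos (1 - 2 * u ^ 2) = 2 * arcsin u := by
  rw [← sin_arcsin (by linarith) hu₁, ← cos_two_mul_eq_one_sub, sin_arcsin (by linarith) hu₁,
    arccos_cos (by linarith [arcsin_nonneg.2 hu₀]) (by linarith [arcsin_le_pi_div_two u])]

lemma self_le_arcsin {u : ℝ} (hu₀ : 0 ≤ u) (hu₁ : u ≤ 1) : u ≤ arcsin u := by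
  simpa only [sin_arcsin (by linarith) hu₁] using sin_le (arcsin_nonneg.2 hu₀)

lemma arcsin_le_pi_div_two_mul {u : ℝ} (hu₀ : 0 ≤ u) (hu₁ : u ≤ 1) :
    arcsin u ≤ π / 2 * u := by
  have h := mul_le_sin (arcsin_nonneg.2 hu₀) (arcsin_le_pi_div_two u)
  rw [sin_arcsin (by linarith) hu₁, div_mul_eq_mul_div, div_le_iff₀ pi_pos] at h
  linarith

lemma arcsin_sub_self_lt {u : ℝ} (hu₀ : 0 < u) (hu₁ : u ≤ 1) :
    arcsin u - u < arcsin u ^ 3 / 6 := by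
  have h := sin_gt_sub_cube (arcsin_pos.2 hu₀)
  rw [sin_arcsin (by linarith) hu₁] at h
  linarith

lemma abs_inv_arcsin_sub_inv_le {u : ℝ} (hu₀ : 0 < u) (hu₁ : u ≤ 1) :
    |(arcsin u)⁻¹ - u⁻¹| ≤ π ^ 2 / 24 * u := by
  set s := arcsin u
  have hus : u ≤ s := self_le_arcsin hu₀.le hu₁
  have hs₀ : 0 < s := hu₀.trans_le hus
  calc |s⁻¹ - u⁻¹| = (s - u) / (s * u) := by
        rw [abs_of_nonpos (sub_nonpos.2 (inv_anti₀ hu₀ hus))]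
        field_simp
        ring
    _ ≤ s ^ 3 / 6 / (s * u) := by
        gcongr
        exact (arcsin_sub_self_lt hu₀ hu₁).le
    _ = s ^ 2 / (6 * u) := by
        field_simp
    _ ≤ (π / 2 * u) ^ 2 / (6 * u) := by
        gcongr
        exact arcsin_le_pi_div_two_mul hu₀.le hu₁
    _ = π ^ 2 / 24 * u := by
        field_simp
        ring

end Real

theorem stmt_4 :
    ∃ C : ℝ, ∀ x : ℝ, 1 ≤ x →
      |Real.pi / Real.arccos (1 - 1 / (2 * x ^ 2)) - Real.pi * x| ≤ C / x := by
  refine ⟨π ^ 3 / 96, fun x hx => ?_⟩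
  have hx₀ : 0 < x := by linarith
  have hu₀ : 0 < 1 / (2 * x) := by positivity
  have hu₁ : 1 / (2 * x) ≤ 1 := by
    rw [div_le_one (by positivity)]
    linarith
  have hangle : arccos (1 - 1 / (2 * x ^ 2)) = 2 * arcsin (1 / (2 * x)) := by
    rw [← arccos_one_sub_two_mul_sq hu₀.le hu₁]
    congr 1
    field_simp
  calc |π / arccos (1 - 1 / (2 * x ^ 2)) - π * x|
      = π / 2 * |(arcsin (1 / (2 * x)))⁻¹ - (1 / (2 * x))⁻¹| := by
        rw [hangle, ← abs_of_pos (div_pos pi_pos two_pos), ← abs_mul]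
        congr 1
        field_simp
    _ ≤ π / 2 * (π ^ 2 / 24 * (1 / (2 * x))) := by
        gcongr
        exact abs_inv_arcsin_sub_inv_le hu₀ hu₁
    _ = π ^ 3 / 96 / x := by
        field_simp
        ring
end

section
/- Let m, n ≥ 1 be integers and set q := gcd(m,n)·(mn)^{-1}·2π. Then for any real θ*, max_{i ∈ {0,…,m−1}, j ∈ {0,…,n−1}} cos(2πi/m − 2πj/n − θ*) ≥ cos(q/2). -/
open Real

theorem stmt_11 (m n : ℕ) (hm : 1 ≤ m) (hn : 1 ≤ n) (θ : ℝ) :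
    ∃ i < m, ∃ j < n,
      Real.cos (2 * Real.pi * i / m - 2 * Real.pi * j / n - θ)
        ≥ Real.cos ((2 * Real.pi * Nat.gcd m n / (m * n)) / 2) := by
  have hm0 : (0:ℝ) < m := by exact_mod_cast hm
  have hn0 : (0:ℝ) < n := by exact_mod_cast hn
  set d : ℕ := Nat.gcd m n with hd
  have hdpos : 0 < d := Nat.gcd_pos_of_pos_left n hm
  have hd0 : (0:ℝ) < d := by exact_mod_cast hdpos
  set q : ℝ := 2 * Real.pi * d / (m * n) with hq
  have hqpos : 0 < q := by positivity
  set k : ℤ := round (θ / q) with hk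
  set x : ℤ := Nat.gcdA m n
  set y : ℤ := Nat.gcdB m n
  have hbez : (d:ℤ) = m * x + n * y := Nat.gcd_eq_gcd_ab m n
  have hmz : (m:ℤ) ≠ 0 := by positivity
  have hnz : (n:ℤ) ≠ 0 := by positivity
  set i : ℕ := ((k * y) % (m:ℤ)).toNat with hi
  set j : ℕ := ((-(k * x)) % (n:ℤ)).toNat with hj
  have him : i < m := by
    have := Int.emod_lt_of_pos (k*y) (b := (m:ℤ)) (by exact_mod_cast hm)
    omega
  have hjn : j < n := by
    have := Int.emod_lt_of_pos (-(k*x)) (b := (n:ℤ)) (by exact_mod_cast hn)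
    omega
  have hiz : (i:ℤ) = (k * y) % (m:ℤ) :=
    Int.toNat_of_nonneg (Int.emod_nonneg _ hmz)
  have hjz : (j:ℤ) = (-(k * x)) % (n:ℤ) :=
    Int.toNat_of_nonneg (Int.emod_nonneg _ hnz)
  have h1 : (i:ℤ) ≡ k * y [ZMOD (m:ℤ)] := by
    rw [hiz]; exact Int.emod_emod_of_dvd _ dvd_rfl
  have h2 : (j:ℤ) ≡ -(k * x) [ZMOD (n:ℤ)] := by
    rw [hjz]; exact Int.emod_emod_of_dvd _ dvd_rfl
  have h1' : (i:ℤ) * n ≡ k * y * n [ZMOD ((m:ℤ) * n)] := h1.mul_right'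
  have h2' : (j:ℤ) * m ≡ -(k * x) * m [ZMOD ((m:ℤ) * n)] := by
    have := h2.mul_right' (c := (m:ℤ))
    rwa [mul_comm (n:ℤ) m] at this
  have h3 : (i:ℤ) * n - j * m ≡ k * d [ZMOD ((m:ℤ) * n)] := by
    have := h1'.sub h2'
    have he : k * y * n - (-(k * x) * m) = k * (d:ℤ) := by
      rw [hbez]; ring
    rwa [he] at this
  obtain ⟨t, ht⟩ : ((m:ℤ) * n) ∣ ((i:ℤ) * n - j * m - k * d) := (h3.symm).dvd
  refine ⟨i, him, j, hjn, ?_⟩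
  have htR : ((i:ℝ) * n - j * m - k * d) = (m * n) * t := by exact_mod_cast ht
  have hkey : 2 * Real.pi * i / m - 2 * Real.pi * j / n - θ
      = ((k:ℝ) * q - θ) + t * (2 * Real.pi) := by
    rw [hq]
    field_simp
    linear_combination (2 * Real.pi) * htR
  rw [hkey, Real.cos_add_int_mul_two_pi]
  have habs : |θ - k * q| ≤ q / 2 := by
    have h := abs_sub_round (θ / q)
    have he : θ - k * q = q * (θ / q - k) := by
      field_simp
    rw [he, abs_mul, abs_of_pos hqpos]
    calc q * |θ / q - (k:ℝ)| ≤ q * (1/2) := by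
          exact mul_le_mul_of_nonneg_left h hqpos.le
      _ = q / 2 := by ring
  have hdm : (d:ℝ) ≤ m * n := by
    have h1 : d ≤ m := Nat.le_of_dvd hm (Nat.gcd_dvd_left m n)
    have h2 : d ≤ m * n := le_trans h1 (Nat.le_mul_of_pos_right m hn)
    exact_mod_cast h2
  have hq2 : q ≤ 2 * Real.pi := by
    rw [hq, div_le_iff₀ (by positivity)]
    nlinarith [Real.pi_pos]
  have hqle : q / 2 ≤ Real.pi := by linarith
  have hc : Real.cos ((k:ℝ) * q - θ) = Real.cos |θ - k * q| := by
    rw [Real.cos_abs, ← Real.cos_neg, neg_sub]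
  rw [hc]
  exact Real.cos_le_cos_of_nonneg_of_le_pi (abs_nonneg _) hqle habs
end

section
/- Let t ≥ 1 be real and n a positive integer. If n² > π²(t+1)² + 1, and m is a positive integer with m < n ≤ m+4, then the first-order condition −(2t+1)/(2(t+1)) > t(1 − q²/8) − (t+1)(1 − π²/(2n²) + π⁴/(24 n⁴)) can fail only by terms of order 1/n², where q = 2π gcd(m,n)/(mn). -/
theorem stmt_15 :
    ∃ C : ℝ, 0 < C ∧ ∀ (t : ℝ), 1 ≤ t → ∀ (n m : ℕ), 0 < m → m < n → n ≤ m + 4 →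
      (n : ℝ) ^ 2 > Real.pi ^ 2 * (t + 1) ^ 2 + 1 →
        -(2 * t + 1) / (2 * (t + 1)) >
          t * (1 - (2 * Real.pi * Nat.gcd m n / (m * n)) ^ 2 / 8) -
            (t + 1) * (1 - Real.pi ^ 2 / (2 * (n : ℝ) ^ 2) +
              Real.pi ^ 4 / (24 * (n : ℝ) ^ 4)) - C / (n : ℝ) ^ 2 := by
  refine ⟨1, one_pos, ?_⟩
  intro t ht n m hm hmn hnm hbig
  have hn : (0 : ℝ) < n := by
    have : 0 < n := lt_of_le_of_lt (Nat.zero_le m) hmn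
    exact_mod_cast this
  have ht1 : (0 : ℝ) < t + 1 := by linarith
  have hq : 0 ≤ t * (2 * Real.pi * Nat.gcd m n / (m * n)) ^ 2 / 8 := by positivity
  have hpi : 0 < Real.pi := Real.pi_pos
  have hn2 : (0 : ℝ) < (n : ℝ) ^ 2 := by positivity
  have hn4 : (0 : ℝ) < (n : ℝ) ^ 4 := by positivity
  have step : t * (1 - (2 * Real.pi * Nat.gcd m n / (m * n)) ^ 2 / 8) -
      (t + 1) * (1 - Real.pi ^ 2 / (2 * (n : ℝ) ^ 2) +
        Real.pi ^ 4 / (24 * (n : ℝ) ^ 4)) - 1 / (n : ℝ) ^ 2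
      ≤ t - (t + 1) * (1 - Real.pi ^ 2 / (2 * (n : ℝ) ^ 2)) - 1 / (n : ℝ) ^ 2 := by
    have h4 : 0 ≤ (t + 1) * (Real.pi ^ 4 / (24 * (n : ℝ) ^ 4)) := by positivity
    nlinarith [hq, h4]
  refine lt_of_le_of_lt step ?_
  have h1 : -(2 * t + 1) / (2 * (t + 1)) = -1 + 1 / (2 * (t + 1)) := by
    field_simp; ring
  have h2 : t - (t + 1) * (1 - Real.pi ^ 2 / (2 * (n : ℝ) ^ 2)) - 1 / (n : ℝ) ^ 2
      = -1 + ((t + 1) * Real.pi ^ 2 / 2 - 1) / (n : ℝ) ^ 2 := by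
    field_simp; ring
  rw [h1, h2]
  have key : ((t + 1) * Real.pi ^ 2 / 2 - 1) / (n : ℝ) ^ 2 < 1 / (2 * (t + 1)) := by
    rw [div_lt_div_iff₀ hn2 (by linarith)]
    nlinarith [hbig]
  linarith
end

section
/- For every positive integer N, if each of N circles is assigned n prototypes, where n is the minimal integer with cos(π/n) > (2N²−1)/(2N²), then the total N·n satisfies N·n > N²·π − N·π. -/
theorem stmt_17 (N : ℕ) (hN : 0 < N) (n : ℕ)
    (hmin : IsLeast {k : ℕ | 0 < k ∧
      Real.cos (Real.pi / k) > (2 * (N : ℝ) ^ 2 - 1) / (2 * (N : ℝ) ^ 2)} n) :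
    (N : ℝ) * n > (N : ℝ) ^ 2 * Real.pi - (N : ℝ) * Real.pi := by
  obtain ⟨⟨hn0, hmem⟩, -⟩ := hmin
  have hπ := Real.pi_pos
  have hn0' : (0 : ℝ) < n := by exact_mod_cast hn0
  rcases eq_or_lt_of_le (show 1 ≤ N from hN) with hN1 | hN2
  · have : (N : ℝ) = 1 := by exact_mod_cast hN1.symm
    rw [this]
    nlinarith
  · have hN2' : (2 : ℝ) ≤ (N : ℝ) := by exact_mod_cast hN2
    by_contra h
    push_neg at h
    have hNpos : (0 : ℝ) < N := by positivity
    have hn_le : (n : ℝ) ≤ ((N : ℝ) - 1) * Real.pi := by nlinarith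
    have hM1 : (0 : ℝ) < (N : ℝ) - 1 := by linarith
    obtain ⟨x, hx0, hx1, hxM⟩ :
        ∃ x : ℝ, 0 < x ∧ x ≤ 1 ∧ x * ((N : ℝ) - 1) = 1 :=
      ⟨1 / ((N : ℝ) - 1), by positivity,
        by rw [div_le_one hM1]; linarith, by field_simp⟩
    have ht_le : Real.pi / n ≤ Real.pi := by
      rw [div_le_iff₀ hn0']
      nlinarith [(show (1:ℝ) ≤ n by exact_mod_cast hn0)]
    have hx_le_t : x ≤ Real.pi / n := by
      rw [le_div_iff₀ hn0']
      nlinarith [mul_le_mul_of_nonneg_left hn_le hx0.le]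
    have hcos1 : Real.cos (Real.pi / n) ≤ Real.cos x :=
      Real.cos_le_cos_of_nonneg_of_le_pi hx0.le ht_le hx_le_t
    have hb := Real.cos_bound (by rwa [abs_of_pos hx0] : |x| ≤ 1)
    rw [abs_of_pos hx0] at hb
    have hcos2 : Real.cos x ≤ 1 - x ^ 2 / 2 + x ^ 4 * (5 / 96) := by
      have := (abs_sub_le_iff.1 hb).1
      linarith
    have hrhs : (2 * (N : ℝ) ^ 2 - 1) / (2 * (N : ℝ) ^ 2) = 1 - 1 / (2 * (N : ℝ) ^ 2) := by
      field_simp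
    rw [hrhs] at hmem
    have h5 : x ^ 2 * ((N : ℝ) - 1) ^ 2 = 1 := by
      have h := congrArg (· ^ 2) hxM
      simpa [mul_pow] using h
    have h4 : x ^ 4 * ((N : ℝ) - 1) ^ 4 = 1 := by
      have h := congrArg (· ^ 2) h5
      have e : (x ^ 2 * ((N : ℝ) - 1) ^ 2) ^ 2 = x ^ 4 * ((N : ℝ) - 1) ^ 4 := by ring
      simpa [e] using h
    have key : 1 - x ^ 2 / 2 + x ^ 4 * (5 / 96) ≤ 1 - 1 / (2 * (N : ℝ) ^ 2) := by
      have hstep : 1 / (2 * (N : ℝ) ^ 2) ≤ x ^ 2 / 2 - x ^ 4 * (5 / 96) := by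
        rw [div_le_iff₀ (by positivity : (0:ℝ) < 2 * (N : ℝ) ^ 2)]
        have hfin : ((x ^ 2 / 2 - x ^ 4 * (5 / 96)) * (2 * (N : ℝ) ^ 2) - 1) *
            (((N : ℝ) - 1) ^ 2) ^ 2 =
            (N : ℝ) ^ 2 * ((N : ℝ) - 1) ^ 2 - 5 * (N : ℝ) ^ 2 / 48 - ((N : ℝ) - 1) ^ 4 := by
          linear_combination ((N : ℝ) ^ 2 * ((N : ℝ) - 1) ^ 2) * h5
            - (5 * (N : ℝ) ^ 2 / 48) * h4
        have hq : (0:ℝ) ≤ (N : ℝ) ^ 2 * ((N : ℝ) - 1) ^ 2 - 5 * (N : ℝ) ^ 2 / 48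
            - ((N : ℝ) - 1) ^ 4 := by nlinarith [hN2', sq_nonneg ((N : ℝ) - 2)]
        have ha4 : (0:ℝ) < (((N : ℝ) - 1) ^ 2) ^ 2 := by positivity
        by_contra hc
        push_neg at hc
        have hneg : ((x ^ 2 / 2 - x ^ 4 * (5 / 96)) * (2 * (N : ℝ) ^ 2) - 1) < 0 := by
          linarith
        have := mul_neg_of_neg_of_pos hneg ha4
        rw [hfin] at this
        linarith
      linarith
    linarith
end

section
/- Let t ≥ 1 be real. Any positive integer n satisfying cos(π/n) > (2t²−t−1)/(2t²) satisfies n > π/arccos((2t²−t−1)/(2t²)), and π/arccos((2t²−t−1)/(2t²)) ≥ (t/√(t+1))·π − π. -/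
set_option maxHeartbeats 1000000 in
theorem stmt_18 (t : ℝ) (ht : 1 ≤ t) :
    (∀ n : ℕ, 0 < n →
        Real.cos (Real.pi / n) > (2 * t ^ 2 - t - 1) / (2 * t ^ 2) →
          (n : ℝ) > Real.pi / Real.arccos ((2 * t ^ 2 - t - 1) / (2 * t ^ 2))) ∧
      Real.pi / Real.arccos ((2 * t ^ 2 - t - 1) / (2 * t ^ 2)) ≥
        (t / Real.sqrt (t + 1)) * Real.pi - Real.pi := by
  have ht0 : (0:ℝ) < t := lt_of_lt_of_le one_pos ht
  have ht2 : (0:ℝ) < 2 * t ^ 2 := by positivity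
  set c : ℝ := (2 * t ^ 2 - t - 1) / (2 * t ^ 2) with hcdef
  clear_value c
  have hc0 : 0 ≤ c := by
    rw [hcdef]; apply div_nonneg _ ht2.le; nlinarith
  have hc1 : c < 1 := by
    rw [hcdef, div_lt_one ht2]; nlinarith
  have hac_pos : 0 < Real.arccos c := Real.arccos_pos.mpr hc1
  constructor
  · intro n hn hcos
    have hn' : (0:ℝ) < n := by exact_mod_cast hn
    have h1 : Real.pi / n ≤ Real.pi := by
      apply div_le_self Real.pi_pos.le
      exact_mod_cast hn
    have h2 : Real.arccos (Real.cos (Real.pi / n)) = Real.pi / n :=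
      Real.arccos_cos (by positivity) h1
    have hcosle : Real.cos (Real.pi / n) ≤ 1 := Real.cos_le_one _
    have h3 : Real.arccos (Real.cos (Real.pi / n)) < Real.arccos c := by
      apply Real.strictAntiOn_arccos ⟨by linarith, hc1.le⟩
        ⟨by linarith [hc0], hcosle⟩ hcos
    rw [h2] at h3
    rw [gt_iff_lt, div_lt_iff₀ hac_pos]
    calc Real.pi = (Real.pi / n) * n := by field_simp
    _ < Real.arccos c * n := mul_lt_mul_of_pos_right h3 hn'
    _ = n * Real.arccos c := mul_comm _ _
  · -- second part
    have hst : (0:ℝ) < Real.sqrt (t + 1) := Real.sqrt_pos.mpr (by linarith)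
    rcases le_or_gt c 0 with hc0' | hcpos
    · -- c = 0, so t = 1
      have hc : c = 0 := le_antisymm hc0' hc0
      have harc : Real.arccos c = Real.pi / 2 := by rw [hc, Real.arccos_zero]
      rw [harc]
      have ht1 : t = 1 := by
        have h : 2 * t ^ 2 - t - 1 ≤ 0 := by
          by_contra h
          push_neg at h
          have : 0 < c := hcdef ▸ div_pos h ht2
          linarith
        nlinarith
      subst ht1
      have h2 : Real.pi / (Real.pi / 2) = 2 := by
        field_simp
      rw [h2]
      have hs2 : (1:ℝ) ≤ Real.sqrt (1 + 1) := by
        rw [show (1:ℝ) = Real.sqrt 1 by simp]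
        exact Real.sqrt_le_sqrt (by norm_num)
      have hle : (1:ℝ) / Real.sqrt (1 + 1) ≤ 1 := by
        rw [div_le_one (by positivity)]; exact hs2
      nlinarith [Real.pi_pos, Real.pi_le_four]
    · -- c > 0: use θ ≤ tan θ = √(1-c²)/c
      set θ := Real.arccos c with hθ
      clear_value θ
      have hθhalf : θ < Real.pi / 2 := hθ ▸ Real.arccos_lt_pi_div_two.mpr hcpos
      have htan : θ ≤ Real.tan θ := (Real.lt_tan hac_pos hθhalf).le
      have htanval : Real.tan θ = Real.sqrt (1 - c ^ 2) / c := hθ ▸ Real.tan_arccos c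
      have h1c : 1 - c = (t + 1) / (2 * t ^ 2) := by
        rw [hcdef]; field_simp; ring
      have h2c : 1 + c ≤ 2 := by linarith
      have hsq : 1 - c ^ 2 ≤ (t + 1) / t ^ 2 := by
        have he : 1 - c ^ 2 = (1 - c) * (1 + c) := by ring
        rw [he, h1c, div_mul_eq_mul_div, div_le_div_iff₀ (by positivity) (by positivity)]
        nlinarith [mul_le_mul_of_nonneg_left h2c
          (le_of_lt (mul_pos (show (0:ℝ) < t + 1 by linarith) (by positivity : (0:ℝ) < t ^ 2)))]
      have hdivsq : Real.sqrt ((t + 1) / t ^ 2) = Real.sqrt (t + 1) / t := by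
        rw [Real.sqrt_div (by linarith), Real.sqrt_sq ht0.le]
      have hsqrt : Real.sqrt (1 - c ^ 2) ≤ Real.sqrt (t + 1) / t := by
        rw [← hdivsq]
        exact Real.sqrt_le_sqrt hsq
      have hθle : θ ≤ Real.sqrt (t + 1) / (t * c) := by
        calc θ ≤ Real.sqrt (1 - c ^ 2) / c := htanval ▸ htan
        _ ≤ (Real.sqrt (t + 1) / t) / c := by gcongr
        _ = Real.sqrt (t + 1) / (t * c) := by field_simp
      have hApos : (0:ℝ) < Real.sqrt (t + 1) / (t * c) := by positivity
      have h5 : Real.pi / (Real.sqrt (t + 1) / (t * c)) ≤ Real.pi / θ := by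
        gcongr
      have h6 : Real.pi / (Real.sqrt (t + 1) / (t * c)) = Real.pi * (t * c) / Real.sqrt (t + 1) := by
        field_simp
      have key : t * (1 - c) ≤ Real.sqrt (t + 1) := by
        have he : t * (1 - c) = (t + 1) / (2 * t) := by
          rw [h1c]; field_simp
        have h2 : Real.sqrt (t + 1) * Real.sqrt (t + 1) = t + 1 :=
          Real.mul_self_sqrt (by linarith)
        have h3 : Real.sqrt (t + 1) ≤ 2 * t := by
          rw [show (2 * t) = Real.sqrt ((2 * t) ^ 2) from (Real.sqrt_sq (by positivity)).symm]
          exact Real.sqrt_le_sqrt (by nlinarith)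
        rw [he, div_le_iff₀ (by positivity)]
        nlinarith [mul_le_mul_of_nonneg_left h3 hst.le]
      have h7 : t / Real.sqrt (t + 1) * Real.pi - Real.pi ≤ Real.pi * (t * c) / Real.sqrt (t + 1) := by
        have e1 : t / Real.sqrt (t + 1) * Real.pi - Real.pi
            = (t * Real.pi - Real.pi * Real.sqrt (t + 1)) / Real.sqrt (t + 1) := by
          field_simp
        have hnum : t * Real.pi - Real.pi * Real.sqrt (t + 1) ≤ Real.pi * (t * c) := by
          nlinarith [mul_le_mul_of_nonneg_left key Real.pi_pos.le]
        rw [e1]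
        gcongr
      calc Real.pi / θ ≥ Real.pi * (t * c) / Real.sqrt (t + 1) := h6 ▸ h5
      _ ≥ t / Real.sqrt (t + 1) * Real.pi - Real.pi := h7
end
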